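/- arXiv:1611.09579 — 7 statements merged into one kernel-verified Lean document; each statement's English description precedes it below -/
import Mathlib

section
/- If f : [0,1] → [0,1] is non-decreasing and satisfies ∫₀ʳ f(x) dx ≥ r²/2 for all r ∈ [0,1] with equality at r = 1, then for every measurable set B ⊆ [0,1], ∫_B f(x) dx ≥ μ(B)²/2. That is, for monotone functions, condition I on initial segments implies condition I for all measurable sets. -/
/-! Among all measurable `B ⊆ [0,1]` of measure `b`, the initial segment `[0,b]` carries the least
mass of a non-decreasing `f`: exchanging `B \ [0,b]` for the equally large `[0,b] \ B` only moves
mass from points where `f ≥ f b` to points where `f ≤ f b`. Hence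
`∫_B f ≥ ∫₀ᵇ f ≥ b² / 2`. -/

open MeasureTheory Set

namespace MeasureTheory

variable {α : Type*} [MeasurableSpace α] {μ : Measure α}

lemma measure_sdiff_eq_measure_sdiff_of_measure_eq {s t : Set α} (hs : MeasurableSet s)
    (ht : MeasurableSet t) (hst : μ s = μ t) (hfin : μ s ≠ ⊤) : μ (s \ t) = μ (t \ s) := by
  have hs' := measure_inter_add_sdiff (μ := μ) s ht
  have ht' := measure_inter_add_sdiff (μ := μ) t hs
  rw [inter_comm, ← hst, ← hs'] at ht'
  exact ((ENNReal.add_right_inj (measure_ne_top_of_subset inter_subset_left hfin)).mp ht').symm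

lemma setIntegral_le_setIntegral_of_le_of_le {f : α → ℝ} {s t : Set α} {c : ℝ}
    (hs : MeasurableSet s) (ht : MeasurableSet t) (hst : μ s = μ t) (hfin : μ s ≠ ⊤)
    (hfs : IntegrableOn f s μ) (hft : IntegrableOn f t μ)
    (hle : ∀ x ∈ s \ t, f x ≤ c) (hge : ∀ x ∈ t \ s, c ≤ f x) :
    ∫ x in s, f x ∂μ ≤ ∫ x in t, f x ∂μ := by
  have hfin_st : μ (s \ t) ≠ ⊤ := measure_ne_top_of_subset sdiff_subset hfin
  have hfin_ts : μ (t \ s) ≠ ⊤ := measure_ne_top_of_subset sdiff_subset (hst ▸ hfin)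
  have hdiff : μ.real (s \ t) = μ.real (t \ s) := by
    rw [measureReal_def, measureReal_def,
      measure_sdiff_eq_measure_sdiff_of_measure_eq hs ht hst hfin]
  have hst_le : ∫ x in s \ t, f x ∂μ ≤ ∫ _ in s \ t, c ∂μ :=
    setIntegral_mono_on (hfs.mono_set sdiff_subset) (integrableOn_const hfin_st)
      (hs.diff ht) hle
  have hts_ge : ∫ _ in t \ s, c ∂μ ≤ ∫ x in t \ s, f x ∂μ :=
    setIntegral_mono_on (integrableOn_const hfin_ts) (hft.mono_set sdiff_subset)
      (ht.diff hs) hge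
  rw [setIntegral_const, hdiff, ← setIntegral_const] at hst_le
  rw [← integral_inter_add_sdiff ht hfs, ← integral_inter_add_sdiff hs hft, inter_comm]
  linarith

end MeasureTheory

lemma MonotoneOn.setIntegral_Icc_le_setIntegral {f : ℝ → ℝ} {a c : ℝ}
    (hf : MonotoneOn f (Icc a c)) {B : Set ℝ} (hB : MeasurableSet B) (hBsub : B ⊆ Icc a c) :
    ∫ x in Icc a (a + volume.real B), f x ≤ ∫ x in B, f x := by
  obtain rfl | ⟨x₀, hx₀⟩ := B.eq_empty_or_nonempty
  · simp
  set b := a + volume.real B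
  have hac : a ≤ c := (hBsub hx₀).1.trans (hBsub hx₀).2
  have hvol : volume.real B ≤ c - a := by
    simpa [Real.volume_real_Icc_of_le hac] using
      measureReal_mono (μ := volume) hBsub measure_Icc_lt_top.ne
  have hb : b ∈ Icc a c := ⟨by simp [b, measureReal_nonneg], by linarith⟩
  have hint := hf.integrableOn_isCompact (μ := volume) isCompact_Icc
  refine setIntegral_le_setIntegral_of_le_of_le (c := f b) measurableSet_Icc hB ?_
    measure_Icc_lt_top.ne (hint.mono_set (Icc_subset_Icc le_rfl hb.2)) (hint.mono_set hBsub)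
    (fun x hx ↦ hf (Icc_subset_Icc le_rfl hb.2 hx.1) hb hx.1.2)
    (fun x hx ↦ hf hb (hBsub hx.1) ?_)
  · rw [Real.volume_Icc, add_sub_cancel_left, measureReal_def,
      ENNReal.ofReal_toReal (measure_ne_top_of_subset hBsub measure_Icc_lt_top.ne)]
  · by_contra! hxb
    exact hx.2 ⟨(hBsub hx.1).1, hxb.le⟩

theorem stmt_3_general
    (f : ℝ → ℝ)
    (hmono : MonotoneOn f (Icc (0:ℝ) 1))
    (hinit : ∀ r ∈ Icc (0:ℝ) 1, r ^ 2 / 2 ≤ ∫ x in Icc (0:ℝ) r, f x) :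
    ∀ B : Set ℝ, MeasurableSet B → B ⊆ Icc (0:ℝ) 1 →
      (volume B).toReal ^ 2 / 2 ≤ ∫ x in B, f x := by
  intro B hB hBsub
  have hvol : volume.real B ≤ 1 := by
    simpa using measureReal_mono (μ := volume) hBsub measure_Icc_lt_top.ne
  calc (volume B).toReal ^ 2 / 2 ≤ ∫ x in Icc 0 (volume.real B), f x :=
        hinit _ ⟨measureReal_nonneg, hvol⟩
    _ ≤ ∫ x in B, f x := by
        simpa using hmono.setIntegral_Icc_le_setIntegral hB hBsub

theorem stmt_3
    (f : ℝ → ℝ) (hfmeas : Measurable f)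
    (hf01 : ∀ x ∈ Icc (0:ℝ) 1, f x ∈ Icc (0:ℝ) 1)
    (hmono : MonotoneOn f (Icc (0:ℝ) 1))
    (hinit : ∀ r ∈ Icc (0:ℝ) 1, r ^ 2 / 2 ≤ ∫ x in Icc (0:ℝ) r, f x)
    (heq : ∫ x in Icc (0:ℝ) 1, f x = 1 / 2) :
    ∀ B : Set ℝ, MeasurableSet B → B ⊆ Icc (0:ℝ) 1 →
      (volume B).toReal ^ 2 / 2 ≤ ∫ x in B, f x :=
  stmt_3_general f hmono hinit
end

section
/- If f : [0,1] → [0,1] is a non-decreasing function satisfying condition I, then x/2 ≤ f(x) ≤ (x+1)/2 for almost every x ∈ [0,1]. -/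
open MeasureTheory Set

/-- Condition **I**: for every measurable `B ⊆ [0,1]`, `∫_B f ≥ μ(B)²/2`,
with equality whenever `μ(B) = 1`. -/
def CondI (f : ℝ → ℝ) : Prop :=
  ∀ B : Set ℝ, MeasurableSet B → B ⊆ Icc (0:ℝ) 1 →
    ((volume B).toReal ^ 2 / 2 ≤ ∫ x in B, f x) ∧
      (volume B = 1 → ∫ x in B, f x = (volume B).toReal ^ 2 / 2)

/-!
Comparing `f` with its value at `x`: monotonicity gives `∫₀ˣ f ≤ x f(x)` and
`(1 - x) f(x) ≤ ∫ₓ¹ f`, while condition I gives `∫₀ˣ f ≥ x²/2` and `∫₀¹ f = 1/2`, hence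
`∫ₓ¹ f ≤ (1 - x²)/2`. Dividing by `x` and by `1 - x` gives both bounds at every
interior point; the endpoints are a null set.
-/

namespace MonotoneOn

variable {f : ℝ → ℝ} {a b x : ℝ}

theorem setIntegral_Icc_le_mul (hf : MonotoneOn f (Icc a b)) (hx : x ∈ Icc a b) :
    ∫ y in Icc a x, f y ≤ (x - a) * f x := by
  have hsub : Icc a x ⊆ Icc a b := Icc_subset_Icc le_rfl hx.2
  calc ∫ y in Icc a x, f y ≤ ∫ _ in Icc a x, f x :=
        setIntegral_mono_on ((hf.integrableOn_isCompact isCompact_Icc).mono_set hsub)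
          (integrableOn_const measure_Icc_lt_top.ne) measurableSet_Icc
          fun y hy => hf (hsub hy) hx hy.2
    _ = (x - a) * f x := by
        rw [setIntegral_const, smul_eq_mul, Real.volume_real_Icc_of_le hx.1]

theorem mul_le_setIntegral_Ioc (hf : MonotoneOn f (Icc a b)) (hx : x ∈ Icc a b) :
    (b - x) * f x ≤ ∫ y in Ioc x b, f y := by
  have hsub : Ioc x b ⊆ Icc a b := fun y hy => ⟨hx.1.trans hy.1.le, hy.2⟩
  calc (b - x) * f x = ∫ _ in Ioc x b, f x := by
        rw [setIntegral_const, smul_eq_mul, Real.volume_real_Ioc_of_le hx.2]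
    _ ≤ ∫ y in Ioc x b, f y :=
        setIntegral_mono_on (integrableOn_const measure_Ioc_lt_top.ne)
          ((hf.integrableOn_isCompact isCompact_Icc).mono_set hsub) measurableSet_Ioc
          fun y hy => hf hx (hsub hy) hy.1.le

end MonotoneOn

namespace CondI

variable {f : ℝ → ℝ} {x : ℝ}

theorem sq_div_two_le_setIntegral_Icc (hI : CondI f) (hx : x ∈ Icc (0 : ℝ) 1) :
    x ^ 2 / 2 ≤ ∫ y in Icc 0 x, f y := by
  have h := (hI (Icc 0 x) measurableSet_Icc (Icc_subset_Icc le_rfl hx.2)).1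
  rwa [Real.volume_Icc, sub_zero, ENNReal.toReal_ofReal hx.1] at h

theorem setIntegral_Icc_zero_one (hI : CondI f) : ∫ y in Icc (0 : ℝ) 1, f y = 1 / 2 := by
  have hvol : volume (Icc (0 : ℝ) 1) = 1 := by simp
  rw [(hI _ measurableSet_Icc subset_rfl).2 hvol, hvol]
  norm_num

theorem div_two_le (hI : CondI f) (hmono : MonotoneOn f (Icc 0 1)) (hx : x ∈ Ioo (0 : ℝ) 1) :
    x / 2 ≤ f x := by
  have hx' := Ioo_subset_Icc_self hx
  have h := (hI.sq_div_two_le_setIntegral_Icc hx').trans (hmono.setIntegral_Icc_le_mul hx')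
  nlinarith [hx.1]

theorem le_add_one_div_two (hI : CondI f) (hmono : MonotoneOn f (Icc 0 1))
    (hx : x ∈ Ioo (0 : ℝ) 1) : f x ≤ (x + 1) / 2 := by
  have hx' := Ioo_subset_Icc_self hx
  have hint := hmono.integrableOn_isCompact (μ := volume) isCompact_Icc
  have hsplit : (∫ y in Icc 0 x, f y) + ∫ y in Ioc x 1, f y = 1 / 2 := by
    rw [← setIntegral_union
        ((Iic_disjoint_Ioc le_rfl).mono_left Icc_subset_Iic_self) measurableSet_Ioc
        (hint.mono_set (Icc_subset_Icc le_rfl hx'.2))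
        (hint.mono_set fun y hy => ⟨hx.1.le.trans hy.1.le, hy.2⟩),
      Icc_union_Ioc_eq_Icc hx'.1 hx'.2, hI.setIntegral_Icc_zero_one]
  have h : (1 - x) * f x ≤ (1 - x) * ((x + 1) / 2) := by
    linarith [hmono.mul_le_setIntegral_Ioc hx', hI.sq_div_two_le_setIntegral_Icc hx']
  exact le_of_mul_le_mul_left h (sub_pos.2 hx.2)

end CondI

theorem stmt_4_general
    (f : ℝ → ℝ)
    (hmono : MonotoneOn f (Icc (0:ℝ) 1))
    (hI : CondI f) :
    ∀ᵐ x ∂(volume.restrict (Icc (0:ℝ) 1)), x / 2 ≤ f x ∧ f x ≤ (x + 1) / 2 := by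
  rw [← Measure.restrict_congr_set Ioo_ae_eq_Icc]
  exact ae_restrict_of_forall_mem measurableSet_Ioo fun x hx =>
    ⟨hI.div_two_le hmono hx, hI.le_add_one_div_two hmono hx⟩

theorem stmt_4
    (f : ℝ → ℝ) (hfmeas : Measurable f)
    (hf01 : ∀ x ∈ Icc (0:ℝ) 1, f x ∈ Icc (0:ℝ) 1)
    (hmono : MonotoneOn f (Icc (0:ℝ) 1))
    (hI : CondI f) :
    ∀ᵐ x ∂(volume.restrict (Icc (0:ℝ) 1)), x / 2 ≤ f x ∧ f x ≤ (x + 1) / 2 :=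
  stmt_4_general f hmono hI
end

section
/- Let f : [0,1] → [0,1] satisfy condition I. For each n ≥ 1 define dᵢ = n² ∫_{(i-1)/n}^{i/n} (f(x) − 1/(2n)) dx for i = 1,…,n. Then for every subset J ⊆ {1,…,n}, ∑_{i∈J} dᵢ ≥ |J|(|J|−1)/2, with equality for J = {1,…,n}. -/
open MeasureTheory Set

/-!
Each score is `dᵢ = n² ∫_{Cᵢ} f - 1/2`, where `Cᵢ` is the `i`-th cell of mesh `1/n`. For
`J ⊆ {1,…,n}` the union `B` of the cells `Cᵢ`, `i ∈ J`, has measure `|J|/n`, so condition I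
gives `∑_{i∈J} dᵢ = n² ∫_B f - |J|/2 ≥ |J|²/2 - |J|/2`, with equality when `J` is everything
and `μ(B) = 1`.
-/
theorem CondI.integrableOn {f : ℝ → ℝ} (hI : CondI f) {B : Set ℝ} (hB : MeasurableSet B)
    (hB01 : B ⊆ Icc 0 1) (hB0 : volume B ≠ 0) : IntegrableOn f B := by
  -- Otherwise `∫_B f` would be the junk value `0`, below `μ(B)²/2 > 0`.
  by_contra hf
  have hpos : 0 < volume.real B :=
    ENNReal.toReal_pos hB0 ((measure_mono hB01).trans_lt measure_Icc_lt_top).ne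
  have hle := (hI B hB hB01).1
  rw [integral_undef hf, ← measureReal_def] at hle
  nlinarith

def gridCell (n k : ℕ) : Set ℝ := Ico ((k : ℝ) / n) ((k + 1) / n)

theorem measurableSet_gridCell (n k : ℕ) : MeasurableSet (gridCell n k) := measurableSet_Ico

theorem volume_real_gridCell {n : ℕ} (hn : 0 < n) (k : ℕ) : volume.real (gridCell n k) = 1 / n := by
  rw [gridCell, Real.volume_real_Ico_of_le (by gcongr; linarith)]
  ring

theorem gridCell_subset_Icc {n k : ℕ} (hk : k < n) : gridCell n k ⊆ Icc 0 1 := by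
  have hn : (0 : ℝ) < n := by exact_mod_cast (k.zero_le.trans_lt hk)
  have hk' : (k : ℝ) + 1 ≤ n := by exact_mod_cast hk
  refine Ico_subset_Icc_self.trans (Icc_subset_Icc (by positivity) ?_)
  rwa [div_le_one hn]

theorem pairwise_disjoint_gridCell (n : ℕ) : Pairwise (Function.onFun Disjoint (gridCell n)) := by
  have hmono : Monotone fun k : ℕ => (k : ℝ) / n :=
    fun _ _ h => div_le_div_of_nonneg_right (Nat.cast_le.2 h) n.cast_nonneg
  have h := hmono.pairwise_disjoint_on_Ico_succ
  simp only [Order.succ_eq_add_one, Nat.cast_add_one] at h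
  exact h

theorem volume_gridCell_ne_zero {n : ℕ} (hn : 0 < n) (k : ℕ) : volume (gridCell n k) ≠ 0 := by
  rw [gridCell, Real.volume_Ico, ne_eq, ENNReal.ofReal_eq_zero, not_le, sub_pos]
  gcongr
  linarith

theorem CondI.integrableOn_gridCell {f : ℝ → ℝ} (hI : CondI f) {n k : ℕ} (hk : k < n) :
    IntegrableOn f (gridCell n k) :=
  hI.integrableOn (measurableSet_gridCell n k) (gridCell_subset_Icc hk)
    (volume_gridCell_ne_zero (k.zero_le.trans_lt hk) k)

/-- Cells are indexed from `0`: the paper's `dᵢ` is `gridScore f n (i - 1)`. -/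
noncomputable def gridScore (f : ℝ → ℝ) (n k : ℕ) : ℝ :=
  (n : ℝ) ^ 2 * ∫ x in Icc ((k : ℝ) / n) ((k + 1) / n), (f x - 1 / (2 * n))

theorem gridScore_eq {f : ℝ → ℝ} {n k : ℕ} (hn : 0 < n) (hf : IntegrableOn f (gridCell n k)) :
    gridScore f n k = (n : ℝ) ^ 2 * (∫ x in gridCell n k, f x) - 1 / 2 := by
  have hconst : IntegrableOn (fun _ => 1 / (2 * (n : ℝ))) (gridCell n k) :=
    integrableOn_const (measure_Ico_lt_top.ne)
  rw [gridScore, integral_Icc_eq_integral_Ico, ← gridCell, integral_sub hf hconst,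
    setIntegral_const, volume_real_gridCell hn, smul_eq_mul]
  field_simp

section GridUnion

variable {n : ℕ} (J : Finset (Fin n))

theorem measurableSet_biUnion_gridCell : MeasurableSet (⋃ i ∈ J, gridCell n i) :=
  J.measurableSet_biUnion fun i _ => measurableSet_gridCell n i

theorem biUnion_gridCell_subset_Icc : (⋃ i ∈ J, gridCell n i) ⊆ Icc 0 1 :=
  iUnion₂_subset fun i _ => gridCell_subset_Icc i.isLt

theorem pairwiseDisjoint_gridCell_fin : (J : Set (Fin n)).PairwiseDisjoint fun i => gridCell n i :=
  fun _ _ _ _ hij => pairwise_disjoint_gridCell n (Fin.val_injective.ne hij)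

theorem volume_real_biUnion_gridCell : volume.real (⋃ i ∈ J, gridCell n i) = J.card / n := by
  rw [measureReal_biUnion_finset (pairwiseDisjoint_gridCell_fin J)
    (fun i _ => measurableSet_gridCell n i) (fun _ _ => measure_Ico_lt_top.ne),
    Finset.sum_congr rfl fun (i : Fin n) _ => volume_real_gridCell i.pos i, Finset.sum_const,
    nsmul_eq_mul]
  ring

variable {f : ℝ → ℝ} (hI : CondI f)
include hI

theorem CondI.sum_gridScore :
    ∑ i ∈ J, gridScore f n i = (n : ℝ) ^ 2 * (∫ x in ⋃ i ∈ J, gridCell n i, f x) - J.card / 2 := by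
  rw [integral_biUnion_finset J (fun i _ => measurableSet_gridCell n i)
    (pairwiseDisjoint_gridCell_fin J) fun i _ => hI.integrableOn_gridCell i.isLt,
    Finset.mul_sum,
    Finset.sum_congr rfl fun i _ => gridScore_eq i.pos (hI.integrableOn_gridCell i.isLt),
    Finset.sum_sub_distrib, Finset.sum_const, nsmul_eq_mul]
  ring

theorem CondI.le_sum_gridScore :
    (J.card : ℝ) * (J.card - 1) / 2 ≤ ∑ i ∈ J, gridScore f n i := by
  rcases J.eq_empty_or_nonempty with rfl | ⟨i, -⟩
  · simp
  have hU := (hI _ (measurableSet_biUnion_gridCell J) (biUnion_gridCell_subset_Icc J)).1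
  rw [← measureReal_def, volume_real_biUnion_gridCell] at hU
  have hn : (0 : ℝ) < n := by exact_mod_cast i.pos
  calc (J.card : ℝ) * (J.card - 1) / 2 = (n : ℝ) ^ 2 * ((J.card / n) ^ 2 / 2) - J.card / 2 := by
        field_simp
    _ ≤ ∑ i ∈ J, gridScore f n i := by
        rw [hI.sum_gridScore]
        gcongr

end GridUnion

theorem CondI.sum_univ_gridScore {f : ℝ → ℝ} (hI : CondI f) (n : ℕ) :
    ∑ i : Fin n, gridScore f n i = (n : ℝ) * (n - 1) / 2 := by
  rcases n.eq_zero_or_pos with rfl | hn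
  · simp
  have hvol : volume.real (⋃ i ∈ (Finset.univ : Finset (Fin n)), gridCell n i) = 1 := by
    rw [volume_real_biUnion_gridCell, Finset.card_univ, Fintype.card_fin,
      div_self (Nat.cast_ne_zero.2 hn.ne')]
  have hU := (hI _ (measurableSet_biUnion_gridCell _) (biUnion_gridCell_subset_Icc _)).2
    ((ENNReal.toReal_eq_one_iff _).1 hvol)
  rw [← measureReal_def, hvol] at hU
  rw [hI.sum_gridScore, hU, Finset.card_univ, Fintype.card_fin]
  ring

theorem stmt_5_general
    (f : ℝ → ℝ)
    (hI : CondI f)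
    (n : ℕ)
    (d : Fin n → ℝ)
    (hd : ∀ i : Fin n,
      d i = (n : ℝ) ^ 2 * ∫ x in Icc ((i : ℝ) / n) (((i : ℝ) + 1) / n), (f x - 1 / (2 * n))) :
    (∀ J : Finset (Fin n),
        (J.card : ℝ) * ((J.card : ℝ) - 1) / 2 ≤ ∑ i ∈ J, d i) ∧
      ∑ i : Fin n, d i = (n : ℝ) * ((n : ℝ) - 1) / 2 := by
  obtain rfl : d = fun i : Fin n => gridScore f n i := funext hd
  exact ⟨fun J => hI.le_sum_gridScore J, hI.sum_univ_gridScore n⟩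

theorem stmt_5
    (f : ℝ → ℝ) (hfmeas : Measurable f)
    (hf01 : ∀ x ∈ Icc (0:ℝ) 1, f x ∈ Icc (0:ℝ) 1)
    (hI : CondI f)
    (n : ℕ) (hn : 1 ≤ n)
    (d : Fin n → ℝ)
    (hd : ∀ i : Fin n,
      d i = (n : ℝ) ^ 2 * ∫ x in Icc ((i : ℝ) / n) (((i : ℝ) + 1) / n), (f x - 1 / (2 * n))) :
    (∀ J : Finset (Fin n),
        (J.card : ℝ) * ((J.card : ℝ) - 1) / 2 ≤ ∑ i ∈ J, d i) ∧
      ∑ i : Fin n, d i = (n : ℝ) * ((n : ℝ) - 1) / 2 :=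
  stmt_5_general f hI n d hd
end

section
/- (Landau's theorem) A sequence (d₁,…,dₙ) of non-negative integers is the score sequence of some tournament on n vertices if and only if ∑_{i∈J} dᵢ ≥ binom(|J|,2) for all subsets J ⊆ {1,…,n}, with equality for J = {1,…,n}. -/
/-!
Necessity: the `choose #J 2` arcs inside `J` are all counted by the scores of vertices of `J`.

Sufficiency is Hall's theorem. Give vertex `i` exactly `d i` slots and let each unordered pair
`{u, v}` of distinct vertices compete for the slots of `u` and `v`. A family of pairs spanning the
vertex set `J` has at most `choose #J 2` members and `∑ i ∈ J, d i ≥ choose #J 2` slots available,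
so there is an injective assignment of pairs to slots. Orienting each pair away from the owner of
its slot gives every vertex `i` score at most `d i`, and both total to `choose n 2`.
-/

open Finset

namespace Tournament

variable {V : Type*} [DecidableEq V]

def IsTournament (r : V → V → Bool) : Prop :=
  (∀ u, r u u = false) ∧ ∀ u v, u ≠ v → (r u v = true ↔ r v u = false)

def score [Fintype V] (r : V → V → Bool) (i : V) : ℕ := #{v | r i v = true}

lemma sum_card_filter_eq_card_offDiag_filter {r : V → V → Bool} (hr : ∀ u, r u u = false)
    (J : Finset V) :
    ∑ i ∈ J, #{v ∈ J | r i v = true} = #{p ∈ J.offDiag | r p.1 p.2 = true} := by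
  have hdiag : {p ∈ J.offDiag | r p.1 p.2 = true} = {p ∈ J ×ˢ J | r p.1 p.2 = true} := by
    ext ⟨u, v⟩
    by_cases huv : u = v
    · subst huv; simp [hr]
    · simp [huv]
  rw [hdiag, card_filter, sum_product]
  simp only [card_filter]

lemma card_offDiag_filter_eq_choose {r : V → V → Bool} (hr : IsTournament r) (J : Finset V) :
    #{p ∈ J.offDiag | r p.1 p.2 = true} = (#J).choose 2 := by
  set A := {p ∈ J.offDiag | r p.1 p.2 = true}
  have hinj : Set.InjOn Sym2.mk.uncurry (A : Set (V × V)) := by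
    rintro ⟨a, b⟩ hab ⟨c, d⟩ hcd he
    simp only [A, coe_filter, mem_offDiag, Set.mem_ofPred_eq] at hab hcd
    rcases Sym2.eq_iff.mp he with ⟨rfl, rfl⟩ | ⟨rfl, rfl⟩
    · rfl
    · have := (hr.2 a b hab.1.2.2).mp hab.2
      simp_all
  have himage : A.image Sym2.mk.uncurry = J.offDiag.image Sym2.mk.uncurry := by
    refine (image_subset_image (filter_subset _ _)).antisymm ?_
    rintro _ he
    obtain ⟨⟨a, b⟩, hab, rfl⟩ := mem_image.mp he
    rw [mem_offDiag] at hab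
    cases h : r a b
    · refine mem_image.mpr ⟨(b, a), ?_, Sym2.eq_swap⟩
      simp [hab.1, hab.2.1, Ne.symm hab.2.2, (hr.2 b a (Ne.symm hab.2.2)).mpr h]
    · exact mem_image.mpr ⟨(a, b), by simp [hab, h], rfl⟩
  rw [← Sym2.card_image_offDiag, ← himage, card_image_of_injOn hinj]

lemma sum_score_ge_choose [Fintype V] {r : V → V → Bool} (hr : IsTournament r) (J : Finset V) :
    (#J).choose 2 ≤ ∑ i ∈ J, score r i := by
  rw [← card_offDiag_filter_eq_choose hr, ← sum_card_filter_eq_card_offDiag_filter hr.1]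
  exact sum_le_sum fun i _ => card_le_card (filter_subset_filter _ (subset_univ J))

lemma sum_score [Fintype V] {r : V → V → Bool} (hr : IsTournament r) :
    ∑ i, score r i = (Fintype.card V).choose 2 := by
  rw [← card_univ, ← card_offDiag_filter_eq_choose hr,
    ← sum_card_filter_eq_card_offDiag_filter hr.1]
  rfl

def ofWinner (w : {e : Sym2 V // ¬e.IsDiag} → V) (u v : V) : Bool :=
  if h : u = v then false else decide (w ⟨s(u, v), Sym2.mk_isDiag_iff.not.mpr h⟩ = u)

lemma isTournament_ofWinner {w : {e : Sym2 V // ¬e.IsDiag} → V} (hw : ∀ e, w e ∈ e.1) :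
    IsTournament (ofWinner w) := by
  refine ⟨fun u => by simp [ofWinner], fun u v huv => ?_⟩
  have hswap : (⟨s(v, u), Sym2.mk_isDiag_iff.not.mpr huv.symm⟩ : {e : Sym2 V // ¬e.IsDiag})
      = ⟨s(u, v), Sym2.mk_isDiag_iff.not.mpr huv⟩ := Subtype.ext Sym2.eq_swap
  have hmem := Sym2.mem_iff.mp (hw ⟨s(u, v), Sym2.mk_isDiag_iff.not.mpr huv⟩)
  simp only [ofWinner, huv, huv.symm, dite_false, hswap, decide_eq_true_iff,
    decide_eq_false_iff_not]
  rcases hmem with h | h <;> simp [h, huv, huv.symm]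

lemma score_ofWinner_le [Fintype V] (w : {e : Sym2 V // ¬e.IsDiag} → V) (i : V) :
    score (ofWinner w) i ≤ #{e | w e = i} := by
  rw [← card_map (Function.Embedding.subtype _)]
  refine card_le_card_of_injOn (fun v => s(i, v)) (fun v hv => ?_)
    (fun v _ v' _ h => Sym2.congr_right.mp h)
  replace hv : ofWinner w i v = true := by simpa using hv
  have hiv : i ≠ v := fun h => by simp [ofWinner, h] at hv
  simp only [ofWinner, hiv, dite_false, decide_eq_true_eq] at hv
  exact mem_map.mpr ⟨_, mem_filter.mpr ⟨mem_univ _, hv⟩, rfl⟩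

variable [Fintype V]

lemma card_filter_fst_mem_sigma (d : V → ℕ) (J : Finset V) :
    #{x : Σ i, Fin (d i) | x.1 ∈ J} = ∑ i ∈ J, d i := by
  have hJ : ({x | x.1 ∈ J} : Finset (Σ i, Fin (d i))) = J.sigma fun _ => univ := by ext; simp
  simp [hJ, card_sigma]

def slots (d : V → ℕ) (e : Sym2 V) : Finset (Σ i, Fin (d i)) := {x | x.1 ∈ e}

lemma card_le_card_biUnion_slots (d : V → ℕ)
    (hL : ∀ J : Finset V, (#J).choose 2 ≤ ∑ i ∈ J, d i) (s : Finset {e : Sym2 V // ¬e.IsDiag}) :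
    #s ≤ #(s.biUnion fun e => slots d e.1) := by
  set J := s.biUnion fun e => e.1.toFinset
  have hs : #s ≤ (#J).choose 2 := by
    rw [← Sym2.card_image_offDiag]
    refine card_le_card_of_injOn Subtype.val ?_ Subtype.val_injective.injOn
    rintro ⟨e, he⟩ hes
    induction e using Sym2.ind with
    | h a b =>
      refine mem_image.mpr ⟨(a, b), ?_, rfl⟩
      simp only [mem_offDiag, J, mem_biUnion, Sym2.mem_toFinset]
      exact ⟨⟨_, hes, Sym2.mem_mk_left a b⟩, ⟨_, hes, Sym2.mem_mk_right a b⟩,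
        Sym2.mk_isDiag_iff.not.mp he⟩
  have hJ : s.biUnion (fun e => slots d e.1) = ({x | x.1 ∈ J} : Finset (Σ i, Fin (d i))) := by
    ext; simp [slots, J, Sym2.mem_toFinset]
  rw [hJ, card_filter_fst_mem_sigma]
  exact hs.trans (hL J)

lemma exists_injective_slot (d : V → ℕ) (hL : ∀ J : Finset V, (#J).choose 2 ≤ ∑ i ∈ J, d i) :
    ∃ f : {e : Sym2 V // ¬e.IsDiag} → Σ i, Fin (d i), f.Injective ∧ ∀ e, (f e).1 ∈ e.1 := by
  obtain ⟨f, hf, hmem⟩ := (all_card_le_biUnion_card_iff_exists_injective _).mp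
    (card_le_card_biUnion_slots d hL)
  exact ⟨f, hf, fun e => by simpa [slots] using hmem e⟩

lemma exists_isTournament_score_eq (d : V → ℕ)
    (hL : ∀ J : Finset V, (#J).choose 2 ≤ ∑ i ∈ J, d i)
    (hs : ∑ i, d i = (Fintype.card V).choose 2) :
    ∃ r, IsTournament r ∧ ∀ i, score r i = d i := by
  obtain ⟨f, hf, hfe⟩ := exists_injective_slot d hL
  have hr := isTournament_ofWinner hfe
  have hle : ∀ i ∈ univ, score (ofWinner fun e => (f e).1) i ≤ d i := fun i _ => calc
    _ ≤ #{e | (f e).1 = i} := score_ofWinner_le _ i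
    _ ≤ #{x : Σ j, Fin (d j) | x.1 ∈ ({i} : Finset V)} :=
      card_le_card_of_injOn f (fun e he => by simpa using he) hf.injOn
    _ = d i := by rw [card_filter_fst_mem_sigma, sum_singleton]
  have hsum := (sum_score hr).trans hs.symm
  exact ⟨_, hr, fun i => (sum_eq_sum_iff_of_le hle).mp hsum i (mem_univ i)⟩

end Tournament

theorem stmt_7 (n : ℕ) (d : Fin n → ℕ) :
    (∃ r : Fin n → Fin n → Bool,
        (∀ u, r u u = false) ∧
        (∀ u v, u ≠ v → (r u v = true ↔ r v u = false)) ∧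
        (∀ i : Fin n, d i = (Finset.univ.filter fun v => r i v = true).card)) ↔
      ((∀ J : Finset (Fin n), Nat.choose J.card 2 ≤ ∑ i ∈ J, d i) ∧
        ∑ i : Fin n, d i = Nat.choose n 2) := by
  constructor
  · rintro ⟨r, hdiag, hasym, hd⟩
    have hr : Tournament.IsTournament r := ⟨hdiag, hasym⟩
    obtain rfl : d = Tournament.score r := funext hd
    exact ⟨Tournament.sum_score_ge_choose hr, by simpa using Tournament.sum_score hr⟩
  · rintro ⟨hL, hs⟩
    obtain ⟨r, ⟨hdiag, hasym⟩, hd⟩ :=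
      Tournament.exists_isTournament_score_eq d hL (by simpa using hs)
    exact ⟨r, hdiag, hasym, fun i => (hd i).symm⟩
end

section
/- Let f : [0,1] → [0,1] be a measurable function satisfying condition I, and let f* denote its decreasing rearrangement. Then f* also satisfies condition I. -/
open MeasureTheory Set

/-- The decreasing rearrangement of `f : [0,1] → [0,1]`:
`f*(t) = inf {λ ∈ [0,1] : μ{x ∈ [0,1] : f x > λ} ≤ t}`. -/
noncomputable def decRearrangement (f : ℝ → ℝ) (t : ℝ) : ℝ :=
  sInf {l : ℝ | l ∈ Icc (0:ℝ) 1 ∧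
    volume {x ∈ Icc (0:ℝ) 1 | l < f x} ≤ ENNReal.ofReal t}

/-!
Write `m(λ) = μ{x ∈ [0,1] : f x > λ}`. By construction `f* t ≤ λ ↔ m(λ) ≤ t` (using the right
continuity of `m`), so `f*` is antitone and has the same distribution as `f` on `[0,1]`; in
particular `∫_{[0,1]} f* = ∫_{[0,1]} f = 1/2`.

Let `B ⊆ [0,1]` have measure `b` and let `C = [0,1] \ B`, of measure `s = 1 - b`. Since `f*` is
antitone, `∫_C f* ≤ ∫_0^s f*`. Squeezing a set `A` of measure `s` between `{f > f* s}` and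
`{f ≥ f* s}` (Lebesgue measure has the Darboux property) gives level sets of `A` at least as large
as those of `f*` on `[0, s]`, hence `∫_0^s f* ≤ ∫_A f` by the layer-cake formula. Condition I
for `f` on `[0,1] \ A`, a set of measure `b`, then gives
`∫_B f* = 1/2 - ∫_C f* ≥ 1/2 - ∫_A f = ∫_{[0,1] \ A} f ≥ b²/2`.
-/

open Filter
open scoped ENNReal

lemma setIntegral_le_setIntegral_of_measure_inter_lt_le {α : Type*} [MeasurableSpace α]
    {μ : Measure α} {f g : α → ℝ} {s t : Set α} (hs : MeasurableSet s) (ht : MeasurableSet t)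
    (hf : Measurable f) (hg : Measurable g) (hf0 : ∀ x ∈ s, 0 ≤ f x) (hg0 : ∀ x ∈ t, 0 ≤ g x)
    (hgt : IntegrableOn g t μ) (h : ∀ l > 0, μ (s ∩ {x | l < f x}) ≤ μ (t ∩ {x | l < g x})) :
    ∫ x in s, f x ∂μ ≤ ∫ x in t, g x ∂μ := by
  have hf0' : 0 ≤ᵐ[μ.restrict s] f := (ae_restrict_iff' hs).2 (Eventually.of_forall hf0)
  have hg0' : 0 ≤ᵐ[μ.restrict t] g := (ae_restrict_iff' ht).2 (Eventually.of_forall hg0)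
  rw [integral_eq_lintegral_of_nonneg_ae hf0' hf.aestronglyMeasurable,
    integral_eq_lintegral_of_nonneg_ae hg0' hg.aestronglyMeasurable]
  refine ENNReal.toReal_mono hgt.lintegral_lt_top.ne ?_
  rw [lintegral_eq_lintegral_meas_lt _ hf0' hf.aemeasurable,
    lintegral_eq_lintegral_meas_lt _ hg0' hg.aemeasurable]
  refine setLIntegral_mono' measurableSet_Ioi fun l hl => ?_
  rw [Measure.restrict_apply (measurableSet_lt measurable_const hf),
    Measure.restrict_apply (measurableSet_lt measurable_const hg), inter_comm, inter_comm _ t]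
  exact h l hl

lemma volume_inter_le_volume_Icc_inter {C L : Set ℝ} (hC : C ⊆ Ici 0) (hL : IsLowerSet L)
    {s : ℝ} (hCs : volume C ≤ ENNReal.ofReal s) : volume (C ∩ L) ≤ volume (Icc 0 s ∩ L) := by
  -- Either `L` contains `[0, s]`, or `L ∩ [0, ∞)` lies inside `[0, s]`.
  by_cases hsL : Icc 0 s ⊆ L
  · rw [inter_eq_self_of_subset_left hsL, Real.volume_Icc, sub_zero]
    exact (measure_mono inter_subset_left).trans hCs
  · obtain ⟨x, hx, hxL⟩ := not_subset.1 hsL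
    refine measure_mono fun y ⟨hyC, hyL⟩ => ⟨⟨hC hyC, ?_⟩, hyL⟩
    by_contra! hsy
    exact hxL (hL (hx.2.trans hsy.le) hyL)

lemma Antitone.setIntegral_le_setIntegral_Icc {g : ℝ → ℝ} (hg : Antitone g) (hg0 : 0 ≤ g)
    {C : Set ℝ} (hC : MeasurableSet C) (hC0 : C ⊆ Ici 0) {s : ℝ}
    (hCs : volume C ≤ ENNReal.ofReal s) : ∫ x in C, g x ≤ ∫ x in Icc 0 s, g x :=
  setIntegral_le_setIntegral_of_measure_inter_lt_le hC measurableSet_Icc hg.measurable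
    hg.measurable (fun x _ => hg0 x) (fun x _ => hg0 x)
    ((hg.antitoneOn _).integrableOn_isCompact isCompact_Icc) fun _ _ =>
      volume_inter_le_volume_Icc_inter hC0
        (isLowerSet_setOfPred.2 fun _ _ hab hl => hl.trans_le (hg hab)) hCs

lemma exists_measurableSet_between_volume_eq {G H : Set ℝ} {a b : ℝ} (hG : MeasurableSet G)
    (hH : MeasurableSet H) (hGH : G ⊆ H) (hHab : H ⊆ Icc a b) {r : ℝ≥0∞} (hGr : volume G ≤ r)
    (hrH : r ≤ volume H) : ∃ A, MeasurableSet A ∧ G ⊆ A ∧ A ⊆ H ∧ volume A = r := by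
  -- `φ` sweeps `H` in from the left; it is 1-Lipschitz, so it takes every value in between.
  set φ : ℝ → ℝ≥0∞ := fun u => volume (G ∪ H ∩ Iic u)
  have hφ : Continuous φ := by
    refine continuous_of_le_add_edist 1 ENNReal.one_ne_top fun u v => ?_
    calc φ u ≤ φ v + volume (Ioc v u) := by
          refine (measure_mono ?_).trans (measure_union_le _ _)
          rintro x (hx | ⟨hxH, hxu⟩)
          · exact Or.inl (Or.inl hx)
          · rcases le_or_gt x v with hxv | hvx
            · exact Or.inl (Or.inr ⟨hxH, hxv⟩)
            · exact Or.inr ⟨hvx, hxu⟩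
      _ ≤ φ v + 1 * edist u v := by
          rw [Real.volume_Ioc, one_mul, edist_dist, Real.dist_eq]
          gcongr
          exact le_abs_self _
  have hφa : φ a ≤ volume G := by
    refine (measure_mono ?_).trans ((measure_union_le G {a}).trans (by simp))
    rintro x (hx | ⟨hxH, hxa⟩)
    · exact Or.inl hx
    · exact Or.inr (le_antisymm hxa (hHab hxH).1)
  have hφb : φ b = volume H := by
    simp only [φ]
    rw [inter_eq_self_of_subset_left (hHab.trans Icc_subset_Iic_self),
      union_eq_self_of_subset_left hGH]
  obtain ⟨u, -, hu⟩ :=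
    intermediate_value_uIcc hφ.continuousOn (Icc_subset_uIcc ⟨hφa.trans hGr, hφb ▸ hrH⟩)
  exact ⟨G ∪ H ∩ Iic u, hG.union (hH.inter measurableSet_Iic), subset_union_left,
    union_subset hGH inter_subset_left, hu⟩

lemma integrableOn_of_mapsTo_Icc {f : ℝ → ℝ} (hf : Measurable f) {a b : ℝ}
    (hf01 : MapsTo f (Icc a b) (Icc 0 1)) : IntegrableOn f (Icc a b) :=
  Measure.integrableOn_of_bounded (M := 1) measure_Icc_lt_top.ne hf.aestronglyMeasurable <|
    (ae_restrict_iff' measurableSet_Icc).2 <| Eventually.of_forall fun x hx =>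
      abs_le.2 ⟨by linarith [(hf01 hx).1], (hf01 hx).2⟩

lemma volume_Icc_zero_one_diff {B : Set ℝ} (hB : MeasurableSet B) (hB01 : B ⊆ Icc 0 1) :
    volume (Icc (0:ℝ) 1 \ B) = ENNReal.ofReal (1 - (volume B).toReal) := by
  have hBfin : volume B ≠ ∞ := ((measure_mono hB01).trans_lt measure_Icc_lt_top).ne
  rw [measure_sdiff hB01 hB.nullMeasurableSet hBfin, Real.volume_Icc, sub_zero,
    ENNReal.ofReal_sub _ ENNReal.toReal_nonneg, ENNReal.ofReal_toReal hBfin]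

noncomputable def distribFun (f : ℝ → ℝ) (l : ℝ) : ℝ≥0∞ :=
  volume {x ∈ Icc (0:ℝ) 1 | l < f x}

lemma distribFun_antitone (f : ℝ → ℝ) : Antitone (distribFun f) :=
  fun _ _ h => measure_mono fun _ hx => ⟨hx.1, h.trans_lt hx.2⟩

lemma distribFun_le_one (f : ℝ → ℝ) (l : ℝ) : distribFun f l ≤ 1 :=
  (measure_mono (sep_subset _ _)).trans (by simp [Real.volume_Icc])

lemma distribFun_le_of_forall_gt {f : ℝ → ℝ} {l : ℝ} {c : ℝ≥0∞}
    (h : ∀ l' > l, distribFun f l' ≤ c) : distribFun f l ≤ c := by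
  obtain ⟨u, hu_anti, hlu, hu⟩ := exists_seq_strictAnti_tendsto l
  have hunion : {x ∈ Icc (0:ℝ) 1 | l < f x} = ⋃ n, {x ∈ Icc (0:ℝ) 1 | u n < f x} := by
    ext x
    simp only [mem_sep_iff, mem_iUnion]
    refine ⟨fun ⟨hx, hlx⟩ => ?_, fun ⟨n, hx, hux⟩ => ⟨hx, (hlu n).trans hux⟩⟩
    obtain ⟨n, hn⟩ := (hu.eventually (gt_mem_nhds hlx)).exists
    exact ⟨n, hx, hn⟩
  rw [distribFun, hunion, Monotone.measure_iUnion (s := fun n => {x ∈ Icc (0:ℝ) 1 | u n < f x})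
    fun m n hmn x hx => ⟨hx.1, (hu_anti.antitone hmn).trans_lt hx.2⟩]
  exact iSup_le fun n => h _ (hlu n)

lemma le_volume_le_of_forall_lt {f : ℝ → ℝ} (hf : Measurable f) {c : ℝ} {r : ℝ≥0∞}
    (h : ∀ l < c, r ≤ distribFun f l) : r ≤ volume {x ∈ Icc (0:ℝ) 1 | c ≤ f x} := by
  obtain ⟨u, hu_mono, huc, hu⟩ := exists_seq_strictMono_tendsto c
  have hinter : {x ∈ Icc (0:ℝ) 1 | c ≤ f x} = ⋂ n, {x ∈ Icc (0:ℝ) 1 | u n < f x} := by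
    ext x
    simp only [mem_sep_iff, mem_iInter]
    refine ⟨fun ⟨hx, hcx⟩ n => ⟨hx, (huc n).trans_le hcx⟩, fun hx => ⟨(hx 0).1, ?_⟩⟩
    exact le_of_tendsto' hu fun n => (hx n).2.le
  rw [hinter, Antitone.measure_iInter (s := fun n => {x ∈ Icc (0:ℝ) 1 | u n < f x})
    (fun m n hmn x hx => ⟨hx.1, (hu_mono.monotone hmn).trans_lt hx.2⟩)
    (fun n => (measurableSet_Icc.inter (measurableSet_lt measurable_const hf)).nullMeasurableSet)
    ⟨0, ((distribFun_le_one f _).trans_lt ENNReal.one_lt_top).ne⟩]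
  exact le_iInf fun n => h _ (huc n)

section decRearrangement

variable {f : ℝ → ℝ} (hf01 : ∀ x ∈ Icc (0:ℝ) 1, f x ∈ Icc (0:ℝ) 1)
include hf01

lemma distribFun_one : distribFun f 1 = 0 :=
  measure_mono_null (fun x hx => ((hf01 x hx.1).2.not_gt hx.2).elim) measure_empty

lemma distribFun_of_neg {l : ℝ} (hl : l < 0) : distribFun f l = 1 := by
  rw [distribFun, sep_eq_self_iff_mem_true.2 fun x hx => hl.trans_le (hf01 x hx).1,
    Real.volume_Icc]
  simp

lemma one_mem_levels (t : ℝ) :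
    (1:ℝ) ∈ {l : ℝ | l ∈ Icc (0:ℝ) 1 ∧ distribFun f l ≤ ENNReal.ofReal t} :=
  ⟨right_mem_Icc.2 zero_le_one, (distribFun_one hf01).trans_le zero_le⟩

lemma decRearrangement_nonneg (t : ℝ) : 0 ≤ decRearrangement f t :=
  le_csInf ⟨1, one_mem_levels hf01 t⟩ fun _ hl => hl.1.1

lemma decRearrangement_le_iff {t l : ℝ} (hl : 0 ≤ l) :
    decRearrangement f t ≤ l ↔ distribFun f l ≤ ENNReal.ofReal t := by
  constructor
  · refine fun h => distribFun_le_of_forall_gt fun l' hl' => ?_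
    obtain ⟨k, hk, hkl'⟩ := exists_lt_of_csInf_lt ⟨1, one_mem_levels hf01 t⟩ (h.trans_lt hl')
    exact (distribFun_antitone f hkl'.le).trans hk.2
  · intro h
    rcases le_or_gt l 1 with hl1 | hl1
    · exact csInf_le ⟨0, fun _ hk => hk.1.1⟩ ⟨⟨hl, hl1⟩, h⟩
    · exact (csInf_le ⟨0, fun _ hk => hk.1.1⟩ (one_mem_levels hf01 t)).trans hl1.le

lemma decRearrangement_antitone : Antitone (decRearrangement f) := fun t _ htt' =>
  (decRearrangement_le_iff hf01 (decRearrangement_nonneg hf01 t)).2 <|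
    ((decRearrangement_le_iff hf01 (decRearrangement_nonneg hf01 t)).1 le_rfl).trans
      (ENNReal.ofReal_le_ofReal htt')

lemma volume_lt_decRearrangement {l : ℝ} (hl : 0 ≤ l) :
    volume {t ∈ Icc (0:ℝ) 1 | l < decRearrangement f t} = distribFun f l := by
  have hfin : distribFun f l ≠ ∞ := ((distribFun_le_one f l).trans_lt ENNReal.one_lt_top).ne
  have hr1 : (distribFun f l).toReal ≤ 1 :=
    ENNReal.toReal_le_of_le_ofReal zero_le_one (by simpa using distribFun_le_one f l)
  have hset : {t ∈ Icc (0:ℝ) 1 | l < decRearrangement f t} = Ico 0 (distribFun f l).toReal := by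
    ext t
    simp only [mem_Icc, mem_Ico, ← not_le, decRearrangement_le_iff hf01 hl]
    constructor
    · rintro ⟨⟨ht0, -⟩, ht⟩
      exact ⟨ht0, fun h => ht ((ENNReal.le_ofReal_iff_toReal_le hfin ht0).2 h)⟩
    · rintro ⟨ht0, ht⟩
      refine ⟨⟨ht0, (not_le.1 ht).le.trans hr1⟩, fun h => ht ?_⟩
      exact (ENNReal.le_ofReal_iff_toReal_le hfin ht0).1 h
  rw [hset, Real.volume_Ico, sub_zero, ENNReal.ofReal_toReal hfin]

end decRearrangement

section integrals

variable {f : ℝ → ℝ} (hf : Measurable f) (hf01 : ∀ x ∈ Icc (0:ℝ) 1, f x ∈ Icc (0:ℝ) 1)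
include hf hf01

lemma integral_Icc_decRearrangement :
    ∫ t in Icc (0:ℝ) 1, decRearrangement f t = ∫ x in Icc (0:ℝ) 1, f x := by
  have hg := decRearrangement_antitone hf01
  have hlevel (l : ℝ) (hl : l > 0) :
      volume (Icc 0 1 ∩ {t | l < decRearrangement f t}) = volume (Icc 0 1 ∩ {x | l < f x}) :=
    volume_lt_decRearrangement hf01 hl.le
  exact le_antisymm
    (setIntegral_le_setIntegral_of_measure_inter_lt_le measurableSet_Icc measurableSet_Icc
      hg.measurable hf (fun t _ => decRearrangement_nonneg hf01 t) (fun x hx => (hf01 x hx).1)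
      (integrableOn_of_mapsTo_Icc hf hf01) fun l hl => (hlevel l hl).le)
    (setIntegral_le_setIntegral_of_measure_inter_lt_le measurableSet_Icc measurableSet_Icc
      hf hg.measurable (fun x hx => (hf01 x hx).1) (fun t _ => decRearrangement_nonneg hf01 t)
      ((hg.antitoneOn _).integrableOn_isCompact isCompact_Icc) fun l hl => (hlevel l hl).ge)

lemma exists_setIntegral_Icc_decRearrangement_le {s : ℝ} (hs1 : s ≤ 1) :
    ∃ A ⊆ Icc (0:ℝ) 1, MeasurableSet A ∧ volume A = ENNReal.ofReal s ∧
      ∫ t in Icc 0 s, decRearrangement f t ≤ ∫ x in A, f x := by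
  set c := decRearrangement f s
  have hGs : distribFun f c ≤ ENNReal.ofReal s :=
    (decRearrangement_le_iff hf01 (decRearrangement_nonneg hf01 s)).1 le_rfl
  have hsH : ENNReal.ofReal s ≤ volume {x ∈ Icc (0:ℝ) 1 | c ≤ f x} := by
    refine le_volume_le_of_forall_lt hf fun l hlc => ?_
    rcases lt_or_ge l 0 with hl0 | hl0
    · rw [distribFun_of_neg hf01 hl0]
      exact ENNReal.ofReal_le_one.2 hs1
    · exact (not_le.1 (mt (decRearrangement_le_iff hf01 hl0).2 (not_le.2 hlc))).le
  obtain ⟨A, hA, hGA, hAH, hAs⟩ := exists_measurableSet_between_volume_eq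
    (G := {x ∈ Icc (0:ℝ) 1 | c < f x}) (H := {x ∈ Icc (0:ℝ) 1 | c ≤ f x})
    (measurableSet_Icc.inter (measurableSet_lt measurable_const hf))
    (measurableSet_Icc.inter (measurableSet_le measurable_const hf))
    (fun x hx => ⟨hx.1, hx.2.le⟩) (sep_subset _ _) hGs hsH
  refine ⟨A, hAH.trans (sep_subset _ _), hA, hAs, ?_⟩
  refine setIntegral_le_setIntegral_of_measure_inter_lt_le measurableSet_Icc hA
    (decRearrangement_antitone hf01).measurable hf (fun t _ => decRearrangement_nonneg hf01 t)
    (fun x hx => (hf01 x (hAH hx).1).1)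
    ((integrableOn_of_mapsTo_Icc hf hf01).mono_set (hAH.trans (sep_subset _ _))) fun l hl => ?_
  rcases lt_or_ge l c with hlc | hcl
  · have hAl : A ⊆ {x | l < f x} := fun x hx => hlc.trans_le (hAH hx).2
    rw [inter_eq_self_of_subset_left hAl, hAs]
    calc volume (Icc 0 s ∩ {t | l < decRearrangement f t}) ≤ volume (Icc 0 s) :=
          measure_mono inter_subset_left
      _ = ENNReal.ofReal s := by rw [Real.volume_Icc, sub_zero]
  · calc volume (Icc 0 s ∩ {t | l < decRearrangement f t})
        ≤ volume {t ∈ Icc (0:ℝ) 1 | l < decRearrangement f t} :=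
          measure_mono fun t ht => ⟨⟨ht.1.1, ht.1.2.trans hs1⟩, ht.2⟩
      _ = distribFun f l := volume_lt_decRearrangement hf01 hl.le
      _ ≤ volume (A ∩ {x | l < f x}) :=
          measure_mono fun x hx => ⟨hGA ⟨hx.1, hcl.trans_lt hx.2⟩, hx.2⟩

end integrals

theorem stmt_10
    (f : ℝ → ℝ) (hfmeas : Measurable f)
    (hf01 : ∀ x ∈ Icc (0:ℝ) 1, f x ∈ Icc (0:ℝ) 1)
    (hI : CondI f) :
    CondI (decRearrangement f) := by
  intro B hB hB01
  have hb1 : (volume B).toReal ≤ 1 := ENNReal.toReal_le_of_le_ofReal zero_le_one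
    ((measure_mono hB01).trans_eq (by simp [Real.volume_Icc]))
  have hhalf : ∫ x in Icc (0:ℝ) 1, f x = 1 / 2 := by
    simpa [Real.volume_Icc] using (hI _ measurableSet_Icc subset_rfl).2 (by simp [Real.volume_Icc])
  have hg_int : IntegrableOn (decRearrangement f) (Icc 0 1) :=
    ((decRearrangement_antitone hf01).antitoneOn _).integrableOn_isCompact isCompact_Icc
  have hBC : ∫ t in B, decRearrangement f t = 1 / 2 - ∫ t in Icc 0 1 \ B, decRearrangement f t := by
    rw [setIntegral_sdiff hB hg_int hB01, integral_Icc_decRearrangement hfmeas hf01, hhalf]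
    ring
  obtain ⟨A, hA01, hA, hAs, hgA⟩ := exists_setIntegral_Icc_decRearrangement_le hfmeas hf01
    (sub_le_self 1 ENNReal.toReal_nonneg)
  have hCA : ∫ t in Icc 0 1 \ B, decRearrangement f t ≤ ∫ x in A, f x :=
    ((decRearrangement_antitone hf01).setIntegral_le_setIntegral_Icc
      (decRearrangement_nonneg hf01) (measurableSet_Icc.diff hB)
      (sdiff_subset.trans Icc_subset_Ici_self) (volume_Icc_zero_one_diff hB hB01).le).trans hgA
  have hD := (hI _ (measurableSet_Icc.diff hA) sdiff_subset).1
  rw [setIntegral_sdiff hA (integrableOn_of_mapsTo_Icc hfmeas hf01) hA01, hhalf,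
    volume_Icc_zero_one_diff hA hA01, hAs, ENNReal.toReal_ofReal (sub_nonneg.2 hb1),
    sub_sub_cancel, ENNReal.toReal_ofReal ENNReal.toReal_nonneg] at hD
  refine ⟨by linarith, fun hB1 => ?_⟩
  have hC0 : volume (Icc 0 1 \ B) = 0 := by
    rw [volume_Icc_zero_one_diff hB hB01, hB1]
    simp
  rw [hBC, setIntegral_measure_zero _ hC0, hB1]
  norm_num
end

section
/- If W is a tournament kernel with ∫₀¹∫₀¹∫₀¹ W(x,y)W(y,z)W(z,x) dx dy dz = 0, then the score function f(x) = ∫₀¹ W(x,y) dy has uniform distribution on [0,1]; i.e., the pushforward of Lebesgue measure under f is Lebesgue measure on [0,1]. Equivalently, ∫₀¹ f(x)² dx = 1/3 and more generally ∫₀¹ f(x)^k dx = 1/(k+1) for all k ≥ 0. -/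
open MeasureTheory Set

/-- Lebesgue measure restricted to `[0,1]`. -/
noncomputable def mu : Measure ℝ := volume.restrict (Icc (0:ℝ) 1)

/-!
Without cyclic triangles, `W y x > 0` forces `W x z * W z y = 0` for almost every `z`;
integrating `W x z + W z y ≤ 1` gives `f x ≤ f y`. Hence almost everywhere `W x y = 1` when
`f y < f x` and `W x y = 0` when `f x < f y`, so `f x = |{f < f x}| + ∫_{f = f x} W x y dy`.
On a level set of positive measure `m` the out-degree `r` within the set is therefore constant,
equal to `m / 2` by antisymmetry, while counting transitive triangles gives `3 ∫ r² = m³`,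
a contradiction. So `f` has no atoms and `f x = |{f ≤ f x}|` almost everywhere: the law of `f`
has a continuous cdf `F` with `F s = s` almost surely, and such a law is uniform on `[0, 1]`.
-/

open ProbabilityTheory Function

namespace ProbabilityTheory

variable {ν : Measure ℝ} [IsProbabilityMeasure ν] [NullSingletonClass ν]

theorem continuous_cdf : Continuous (cdf ν) := by
  refine continuous_iff_continuousAt.2 fun x => ?_
  have hleft : leftLim (cdf ν) x = cdf ν x := by
    have h := (cdf ν).measure_singleton x
    rw [measure_cdf, measure_singleton, eq_comm, ENNReal.ofReal_eq_zero] at h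
    linarith [(monotone_cdf ν).leftLim_le (le_refl x)]
  rw [(monotone_cdf ν).continuousAt_iff_leftLim_eq_rightLim, hleft, (cdf ν).rightLim_eq]

/-- `{s | cdf ν s ≤ t}` is a closed down-set bounded above, hence `Iic` of its supremum, at which
the cdf equals `t` by the intermediate value theorem. -/
theorem measure_setOf_cdf_le {t : ℝ} (ht0 : 0 < t) (ht1 : t < 1) :
    ν {s | cdf ν s ≤ t} = ENNReal.ofReal t := by
  obtain ⟨a, ha⟩ := ((tendsto_cdf_atBot ν).eventually (gt_mem_nhds ht0)).exists
  obtain ⟨b, hb⟩ := ((tendsto_cdf_atTop ν).eventually (lt_mem_nhds ht1)).exists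
  set A := {s | cdf ν s ≤ t}
  have hbdd : BddAbove A := ⟨b, fun s hs => ((monotone_cdf ν).reflect_lt (hs.trans_lt hb)).le⟩
  have hmax : sSup A ∈ A :=
    (isClosed_le continuous_cdf continuous_const).csSup_mem ⟨a, ha.le⟩ hbdd
  have hA : A = Iic (sSup A) :=
    Subset.antisymm (fun s hs => le_csSup hbdd hs) fun s hs => (monotone_cdf ν hs).trans hmax
  obtain ⟨s₀, hs₀⟩ :=
    intermediate_value_univ a b (continuous_cdf (ν := ν)) ⟨ha.le, hb.le⟩
  have hval : cdf ν (sSup A) = t :=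
    le_antisymm hmax (hs₀ ▸ monotone_cdf ν (le_csSup hbdd (show s₀ ∈ A from hs₀.le)))
  rw [hA, ← ofReal_cdf, hval]

theorem eq_restrict_Icc_of_ae_cdf_eq (h : ∀ᵐ s ∂ν, cdf ν s = s) :
    ν = volume.restrict (Icc 0 1) := by
  have hcongr : ∀ r : ℝ → Prop, ν {s | r s} = ν {s | r (cdf ν s)} := fun r =>
    measure_congr (h.mono fun s hs => show r s = r (cdf ν s) by rw [hs])
  refine Measure.ext_of_Iic _ _ fun t => ?_
  have hIcc : Iic t ∩ Icc 0 1 = Icc 0 (min t 1) := by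
    ext s; simp only [mem_inter_iff, mem_Iic, mem_Icc, le_min_iff]; tauto
  rw [Measure.restrict_apply measurableSet_Iic, hIcc, Real.volume_Icc, sub_zero]
  rcases le_or_gt t 0 with ht0 | ht0
  · rw [ENNReal.ofReal_of_nonpos (min_le_of_left_le ht0)]
    refine measure_mono_null (Iic_subset_Iic.2 ht0) ?_
    rw [← measure_congr Iio_ae_eq_Iic, ← Iio_def]
    refine (hcongr (· < 0)).trans ?_
    simp [(cdf_nonneg ν _).not_gt]
  rcases le_or_gt 1 t with ht1 | ht1
  · have : {s | cdf ν s ≤ t} = univ := eq_univ_of_forall fun s => (cdf_le_one ν s).trans ht1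
    rw [min_eq_right ht1, ENNReal.ofReal_one, ← measure_univ (μ := ν), ← this]
    exact hcongr (· ≤ t)
  · rw [min_eq_left ht1.le, ← measure_setOf_cdf_le (ν := ν) ht0 ht1]
    exact hcongr (· ≤ t)

end ProbabilityTheory

section Permutations

variable {α β γ : Type*} [MeasurableSpace α] [MeasurableSpace β] [MeasurableSpace γ]
  {μ : Measure α} {ν : Measure β} {τ : Measure γ} [SFinite μ] [SFinite ν] [SFinite τ]

theorem measurePreserving_rotate :
    MeasurePreserving (fun q : α × β × γ => (q.2.1, q.2.2, q.1))
      (μ.prod (ν.prod τ)) (ν.prod (τ.prod μ)) :=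
  (measurePreserving_prodAssoc ν τ μ).comp Measure.measurePreserving_swap

theorem measurePreserving_swap_snd :
    MeasurePreserving (fun q : α × β × γ => (q.1, q.2.2, q.2.1))
      (μ.prod (ν.prod τ)) (μ.prod (τ.prod ν)) :=
  (MeasurePreserving.id μ).prod Measure.measurePreserving_swap

end Permutations

/-- The orientations of a triangle with edge weights `a, b, c` and reverse weights `a', b', c'`:
each transitive one has a unique vertex beating the other two (the first three terms), and the
last two terms are the two cyclic ones. -/
theorem triangle_orientations_sum_eq_one {a b c a' b' c' : ℝ} (ha : a + a' = 1)
    (hb : b + b' = 1) (hc : c + c' = 1) :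
    a * c' + b * a' + c * b' + a * b * c + a' * b' * c' = 1 := by
  obtain rfl : a' = 1 - a := by linarith
  obtain rfl : b' = 1 - b := by linarith
  obtain rfl : c' = 1 - c := by linarith
  ring

section Kernel

variable {α : Type*} [MeasurableSpace α] {μ : Measure α} {W : α → α → ℝ}

def IsTournament (μ : Measure α) (W : α → α → ℝ) : Prop :=
  ∀ᵐ p ∂μ.prod μ, W p.1 p.2 + W p.2 p.1 = 1

def CycleFree (μ : Measure α) (W : α → α → ℝ) : Prop :=
  ∀ᵐ q ∂μ.prod (μ.prod μ), W q.1 q.2.1 * W q.2.1 q.2.2 * W q.2.2 q.1 = 0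

theorem cycleFree_of_integral_eq_zero [IsFiniteMeasure μ] (hW : Measurable (uncurry W))
    (hW01 : ∀ x y, W x y ∈ Icc (0:ℝ) 1)
    (hC3 : ∫ x, ∫ y, ∫ z, W x y * W y z * W z x ∂μ ∂μ ∂μ = 0) : CycleFree μ W := by
  set c : α × α × α → ℝ := fun q => W q.1 q.2.1 * W q.2.1 q.2.2 * W q.2.2 q.1
  have hc01 : ∀ q, c q ∈ Icc (0:ℝ) 1 := fun q =>
    unitInterval.mul_mem (unitInterval.mul_mem (hW01 _ _) (hW01 _ _)) (hW01 _ _)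
  have hc : Measurable c := by fun_prop
  have hint : Integrable c (μ.prod (μ.prod μ)) :=
    Integrable.of_mem_Icc 0 1 hc.aemeasurable (ae_of_all _ hc01)
  refine (integral_eq_zero_iff_of_nonneg (fun q => (hc01 q).1) hint).1 ?_
  rw [integral_prod _ hint, ← hC3]
  refine integral_congr_ae (ae_of_all _ fun x => integral_prod _ ?_)
  exact Integrable.of_mem_Icc 0 1 (hc.comp measurable_prodMk_left).aemeasurable
    (ae_of_all _ fun _ => hc01 _)

theorem ae_sum_beats_both_eq_one [SFinite μ] (hT : IsTournament μ W) (hcyc : CycleFree μ W) :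
    ∀ᵐ q ∂μ.prod (μ.prod μ), W q.1 q.2.1 * W q.1 q.2.2 + W q.2.1 q.2.2 * W q.2.1 q.1
      + W q.2.2 q.1 * W q.2.2 q.2.1 = 1 := by
  have h23 : ∀ᵐ q ∂μ.prod (μ.prod μ), W q.2.1 q.2.2 + W q.2.2 q.2.1 = 1 :=
    Measure.quasiMeasurePreserving_snd.ae hT
  have h31 := measurePreserving_rotate.quasiMeasurePreserving.ae h23
  have h12 := measurePreserving_rotate.quasiMeasurePreserving.ae h31
  have hrev := measurePreserving_swap_snd.quasiMeasurePreserving.ae hcyc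
  filter_upwards [h12, h23, h31, hcyc, hrev] with q h12 h23 h31 hcyc hrev
  linear_combination triangle_orientations_sum_eq_one h12 h23 h31 - hcyc - hrev

theorem three_mul_integral_sq_eq [IsFiniteMeasure μ] (hW : Measurable (uncurry W))
    (hW01 : ∀ x y, W x y ∈ Icc (0:ℝ) 1) (hT : IsTournament μ W) (hcyc : CycleFree μ W) :
    3 * ∫ x, (∫ y, W x y ∂μ) ^ 2 ∂μ = μ.real univ ^ 3 := by
  set ρ : α × α × α → α × α × α := fun q => (q.2.1, q.2.2, q.1)
  set g : α × α × α → ℝ := fun q => W q.1 q.2.1 * W q.1 q.2.2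
  have hρ : MeasurePreserving ρ (μ.prod (μ.prod μ)) (μ.prod (μ.prod μ)) :=
    measurePreserving_rotate
  have hg : Measurable g := by fun_prop
  have h0 : Integrable g (μ.prod (μ.prod μ)) := Integrable.of_mem_Icc 0 1 hg.aemeasurable
    (ae_of_all _ fun q => unitInterval.mul_mem (hW01 _ _) (hW01 _ _))
  have h1 : Integrable (fun q => g (ρ q)) (μ.prod (μ.prod μ)) :=
    hρ.integrable_comp_of_integrable h0
  have h2 : Integrable (fun q => g (ρ (ρ q))) (μ.prod (μ.prod μ)) :=
    hρ.integrable_comp_of_integrable h1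
  have hrot : ∀ G : α × α × α → ℝ, Measurable G →
      ∫ q, G (ρ q) ∂μ.prod (μ.prod μ) = ∫ q, G q ∂μ.prod (μ.prod μ) := fun G hG => by
    rw [← integral_map hρ.measurable.aemeasurable hG.aestronglyMeasurable, hρ.map_eq]
  have hrot₁ : ∫ q, g (ρ q) ∂μ.prod (μ.prod μ) = ∫ q, g q ∂μ.prod (μ.prod μ) :=
    hrot g hg
  have hrot₂ :
      ∫ q, g (ρ (ρ q)) ∂μ.prod (μ.prod μ) = ∫ q, g q ∂μ.prod (μ.prod μ) :=
    (hrot _ (hg.comp hρ.measurable)).trans hrot₁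
  have hg_int : ∫ q, g q ∂μ.prod (μ.prod μ) = ∫ x, (∫ y, W x y ∂μ) ^ 2 ∂μ := by
    rw [integral_prod _ h0]
    exact integral_congr_ae (ae_of_all _ fun x => (integral_prod_mul (W x) (W x)).trans (sq _).symm)
  have hsum :
      ∫ q, (g q + g (ρ q) + g (ρ (ρ q))) ∂μ.prod (μ.prod μ) = μ.real univ ^ 3 := by
    rw [integral_congr_ae (ae_sum_beats_both_eq_one hT hcyc)]
    simp [← univ_prod_univ, measureReal_prod_prod, pow_three]
  rw [integral_add (f := fun q => g q + g (ρ q)) (h0.add h1) h2, integral_add h0 h1, hrot₁,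
    hrot₂, hg_int] at hsum
  linarith

theorem integral_integral_eq_sq_div_two [IsFiniteMeasure μ] (hW : Measurable (uncurry W))
    (hW01 : ∀ x y, W x y ∈ Icc (0:ℝ) 1) (hT : IsTournament μ W) :
    ∫ x, ∫ y, W x y ∂μ ∂μ = μ.real univ ^ 2 / 2 := by
  have hint : Integrable (fun p : α × α => W p.1 p.2) (μ.prod μ) :=
    Integrable.of_mem_Icc 0 1 hW.aemeasurable (ae_of_all _ fun p => hW01 _ _)
  have hint_swap : Integrable (fun p : α × α => W p.2 p.1) (μ.prod μ) := hint.swap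
  have hswap : ∫ p, W p.2 p.1 ∂μ.prod μ = ∫ p, W p.1 p.2 ∂μ.prod μ :=
    integral_prod_swap (fun p : α × α => W p.1 p.2)
  have hsum : ∫ p, (W p.1 p.2 + W p.2 p.1) ∂μ.prod μ = μ.real univ ^ 2 := by
    rw [integral_congr_ae hT]
    simp [← univ_prod_univ, measureReal_prod_prod, sq]
  rw [integral_add hint hint_swap, hswap] at hsum
  rw [← integral_prod _ hint]
  linarith

theorem measure_univ_eq_zero_of_ae_integral_eq [IsFiniteMeasure μ] (hW : Measurable (uncurry W))
    (hW01 : ∀ x y, W x y ∈ Icc (0:ℝ) 1) (hT : IsTournament μ W) (hcyc : CycleFree μ W)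
    {c : ℝ} (hc : ∀ᵐ x ∂μ, ∫ y, W x y ∂μ = c) : μ univ = 0 := by
  set m := μ.real univ
  have hmean : c * m = m ^ 2 / 2 := by
    rw [← integral_integral_eq_sq_div_two hW hW01 hT, integral_congr_ae hc]
    simp [m, mul_comm]
  have hsq : 3 * (c ^ 2 * m) = m ^ 3 := by
    rw [← three_mul_integral_sq_eq hW hW01 hT hcyc,
      integral_congr_ae (hc.mono fun x hx => by rw [hx])]
    simp [m, mul_comm]
  have hm : m = 0 := by
    rcases mul_eq_zero.1 (show m * (2 * c - m) = 0 by linear_combination 2 * hmean) with hm | hm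
    · exact hm
    · obtain rfl : c = m / 2 := by linarith
      exact pow_eq_zero_iff three_ne_zero |>.1 (by linear_combination -4 * hsq)
  exact (measureReal_eq_zero_iff).1 hm

end Kernel

section Score

variable {α : Type*} [MeasurableSpace α] {μ : Measure α} {W : α → α → ℝ}

noncomputable def score (μ : Measure α) (W : α → α → ℝ) (x : α) : ℝ :=
  ∫ y, W x y ∂μ

theorem measurable_score [SFinite μ] (hW : Measurable (uncurry W)) : Measurable (score μ W) :=
  hW.stronglyMeasurable.integral_prod_right'.measurable

theorem integrable_kernel_left [IsFiniteMeasure μ] (hW : Measurable (uncurry W))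
    (hW01 : ∀ x y, W x y ∈ Icc (0:ℝ) 1) (x : α) : Integrable (W x) μ :=
  Integrable.of_mem_Icc 0 1 hW.of_uncurry_left.aemeasurable (ae_of_all _ (hW01 x))

theorem score_le_score_of_pos [IsProbabilityMeasure μ] (hW : Measurable (uncurry W))
    (hW01 : ∀ x y, W x y ∈ Icc (0:ℝ) 1) {x y : α}
    (hcyc : ∀ᵐ z ∂μ, W x z * W z y * W y x = 0) (hy : ∀ᵐ z ∂μ, W y z + W z y = 1)
    (hpos : 0 < W y x) : score μ W x ≤ score μ W y := by
  have hrow := integrable_kernel_left (μ := μ) hW hW01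
  have hcol : Integrable (fun z => W z y) μ :=
    Integrable.of_mem_Icc 0 1 hW.of_uncurry_right.aemeasurable (ae_of_all _ (hW01 · y))
  have hle : ∀ᵐ z ∂μ, W x z + W z y ≤ 1 := by
    filter_upwards [hcyc] with z hz
    rcases mul_eq_zero.1 ((mul_eq_zero.1 hz).resolve_right hpos.ne') with h | h
    · linarith [(hW01 z y).2]
    · linarith [(hW01 x z).2]
  have hin : ∫ z, W z y ∂μ = 1 - score μ W y := by
    rw [integral_congr_ae (hy.mono fun z hz => eq_sub_of_add_eq' hz),
      integral_sub (integrable_const 1) (hrow y)]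
    simp [score]
  have hmono : ∫ z, (W x z + W z y) ∂μ ≤ ∫ _, (1:ℝ) ∂μ :=
    integral_mono_ae ((hrow x).add hcol) (integrable_const 1) hle
  rw [integral_add (hrow x) hcol, hin] at hmono
  simp only [integral_const, probReal_univ, smul_eq_mul, mul_one] at hmono
  change score μ W x + _ ≤ 1 at hmono
  linarith

theorem ae_ae_eq_of_score_lt [IsProbabilityMeasure μ] (hW : Measurable (uncurry W))
    (hW01 : ∀ x y, W x y ∈ Icc (0:ℝ) 1) (hT : IsTournament μ W) (hcyc : CycleFree μ W) :
    ∀ᵐ x ∂μ, ∀ᵐ y ∂μ, (score μ W y < score μ W x → W x y = 1) ∧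
      (score μ W x < score μ W y → W x y = 0) := by
  have hrev := measurePreserving_swap_snd.quasiMeasurePreserving.ae hcyc
  have hsum := Measure.ae_ae_of_ae_prod hT
  filter_upwards [Measure.ae_ae_of_ae_prod hcyc, Measure.ae_ae_of_ae_prod hrev, hsum]
    with x hcx hrx hsx
  filter_upwards [Measure.ae_ae_of_ae_prod hcx, Measure.ae_ae_of_ae_prod hrx, hsum, hsx]
    with y hcxy hrxy hsy hsxy
  refine ⟨fun hlt => ?_, fun hlt => ?_⟩
  · have : W y x = 0 := by
      by_contra hne
      exact hlt.not_ge (score_le_score_of_pos hW hW01 hrxy hsy ((hW01 y x).1.lt_of_ne' hne))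
    linarith
  · by_contra hne
    exact hlt.not_ge (score_le_score_of_pos hW hW01
      (hcxy.mono fun z hz => by linear_combination hz) hsx ((hW01 x y).1.lt_of_ne' hne))

theorem integral_eq_measureReal_lt_add_setIntegral [IsFiniteMeasure μ] {g φ : α → ℝ}
    {t : ℝ} (hg : Integrable g μ) (hφ : Measurable φ)
    (h : ∀ᵐ y ∂μ, (φ y < t → g y = 1) ∧ (t < φ y → g y = 0)) :
    ∫ y, g y ∂μ = μ.real {y | φ y < t} + ∫ y in {y | φ y = t}, g y ∂μ := by
  have hlt : MeasurableSet {y | φ y < t} := hφ measurableSet_Iio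
  have heq : MeasurableSet {y | φ y = t} := hφ (measurableSet_singleton t)
  have hsplit :
      g =ᵐ[μ] fun y => {y | φ y < t}.indicator 1 y + {y | φ y = t}.indicator g y := by
    filter_upwards [h] with y hy
    rcases lt_trichotomy (φ y) t with h' | h' | h'
    · simp [h', h'.ne, hy.1 h']
    · simp [h']
    · simp [h'.ne', h'.not_gt, hy.2 h']
  have hint : Integrable ({y | φ y < t}.indicator (1 : α → ℝ)) μ :=
    (integrable_const 1).indicator hlt
  rw [integral_congr_ae hsplit, integral_add hint (hg.indicator heq),
    integral_indicator_one hlt, integral_indicator heq]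

theorem measure_setOf_score_eq [IsProbabilityMeasure μ] (hW : Measurable (uncurry W))
    (hW01 : ∀ x y, W x y ∈ Icc (0:ℝ) 1) (hT : IsTournament μ W) (hcyc : CycleFree μ W)
    (s : ℝ) : μ {x | score μ W x = s} = 0 := by
  set S := {x | score μ W x = s}
  have hS : MeasurableSet S := measurable_score hW (measurableSet_singleton s)
  have hac : μ.restrict S ≪ μ := Measure.absolutelyContinuous_of_le Measure.restrict_le_self
  rw [← Measure.restrict_apply_univ]
  refine measure_univ_eq_zero_of_ae_integral_eq hW hW01 ((hac.prod hac).ae_le hT)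
    ((hac.prod (hac.prod hac)).ae_le hcyc) (c := s - μ.real {x | score μ W x < s}) ?_
  filter_upwards [ae_restrict_mem hS, ae_restrict_of_ae (ae_ae_eq_of_score_lt hW hW01 hT hcyc)]
    with x (hx : score μ W x = s) hxc
  have := integral_eq_measureReal_lt_add_setIntegral (integrable_kernel_left hW hW01 x)
    (measurable_score hW) hxc
  change score μ W x = _ at this
  rw [hx] at this
  linarith

theorem nullSingletonClass_map_score [IsProbabilityMeasure μ] (hW : Measurable (uncurry W))
    (hW01 : ∀ x y, W x y ∈ Icc (0:ℝ) 1) (hT : IsTournament μ W) (hcyc : CycleFree μ W) :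
    NullSingletonClass (μ.map (score μ W)) := ⟨fun s => by
  rw [Measure.map_apply (measurable_score hW) (measurableSet_singleton s)]
  exact measure_setOf_score_eq hW hW01 hT hcyc s⟩

theorem ae_cdf_map_score_eq [IsProbabilityMeasure μ] (hW : Measurable (uncurry W))
    (hW01 : ∀ x y, W x y ∈ Icc (0:ℝ) 1) (hT : IsTournament μ W) (hcyc : CycleFree μ W) :
    ∀ᵐ x ∂μ, cdf (μ.map (score μ W)) (score μ W x) = score μ W x := by
  have hsc := measurable_score (μ := μ) hW
  have := Measure.isProbabilityMeasure_map (μ := μ) hsc.aemeasurable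
  have := nullSingletonClass_map_score hW hW01 hT hcyc
  filter_upwards [ae_ae_eq_of_score_lt hW hW01 hT hcyc] with x hx
  have h := integral_eq_measureReal_lt_add_setIntegral (integrable_kernel_left hW hW01 x) hsc hx
  rw [setIntegral_measure_zero _ (measure_setOf_score_eq hW hW01 hT hcyc _), add_zero] at h
  rw [cdf_eq_real, ← measureReal_congr Iio_ae_eq_Iic, map_measureReal_apply hsc measurableSet_Iio]
  exact h.symm

theorem map_score_eq_restrict_Icc [IsProbabilityMeasure μ] (hW : Measurable (uncurry W))
    (hW01 : ∀ x y, W x y ∈ Icc (0:ℝ) 1) (hT : IsTournament μ W)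
    (hC3 : ∫ x, ∫ y, ∫ z, W x y * W y z * W z x ∂μ ∂μ ∂μ = 0) :
    μ.map (score μ W) = volume.restrict (Icc 0 1) := by
  have hsc := measurable_score (μ := μ) hW
  have hcyc := cycleFree_of_integral_eq_zero hW hW01 hC3
  have := Measure.isProbabilityMeasure_map (μ := μ) hsc.aemeasurable
  have := nullSingletonClass_map_score hW hW01 hT hcyc
  refine eq_restrict_Icc_of_ae_cdf_eq ((ae_map_iff hsc.aemeasurable ?_).2
    (ae_cdf_map_score_eq hW hW01 hT hcyc))
  exact measurableSet_eq_fun (monotone_cdf _).measurable measurable_id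

end Score

section UnitInterval

instance : IsProbabilityMeasure mu := ⟨by simp [mu, Real.volume_Icc]⟩

theorem integral_mu_congr {g h : ℝ → ℝ} (hgh : EqOn g h (Icc 0 1)) :
    ∫ x, g x ∂mu = ∫ x, h x ∂mu :=
  setIntegral_congr_fun measurableSet_Icc hgh

theorem integral_pow_mu (k : ℕ) : ∫ x, x ^ k ∂mu = 1 / (k + 1) := by
  rw [mu, integral_Icc_eq_integral_Ioc, ← intervalIntegral.integral_of_le zero_le_one,
    integral_pow]
  norm_num

theorem exists_measurable_eqOn_Icc {W : ℝ → ℝ → ℝ} (hW : Measurable (uncurry W))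
    (hW01 : ∀ x ∈ Icc (0:ℝ) 1, ∀ y ∈ Icc (0:ℝ) 1, W x y ∈ Icc (0:ℝ) 1) :
    ∃ V : ℝ → ℝ → ℝ, Measurable (uncurry V) ∧ (∀ x y, V x y ∈ Icc (0:ℝ) 1) ∧
      ∀ x ∈ Icc (0:ℝ) 1, ∀ y ∈ Icc (0:ℝ) 1, V x y = W x y := by
  set p : ℝ → ℝ := fun x => projIcc 0 1 zero_le_one x
  have hp : Measurable p := (continuous_subtype_val.comp continuous_projIcc).measurable
  refine ⟨fun x y => W (p x) (p y), hW.comp (hp.prodMap hp),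
    fun x y => hW01 _ (projIcc 0 1 _ x).2 _ (projIcc 0 1 _ y).2, fun x hx y hy => ?_⟩
  simp [p, projIcc_of_mem _ hx, projIcc_of_mem _ hy]

end UnitInterval

theorem stmt_14
    (W : ℝ → ℝ → ℝ) (hWmeas : Measurable (Function.uncurry W))
    (hW01 : ∀ x ∈ Icc (0:ℝ) 1, ∀ y ∈ Icc (0:ℝ) 1, W x y ∈ Icc (0:ℝ) 1)
    (hWsum : ∀ᵐ p ∂(mu.prod mu), W p.1 p.2 + W p.2 p.1 = 1)
    (hC3 : ∫ x, ∫ y, ∫ z, W x y * W y z * W z x ∂mu ∂mu ∂mu = 0)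
    (f : ℝ → ℝ) (hf : ∀ x, f x = ∫ y, W x y ∂mu) :
    Measure.map f mu = mu ∧ ∀ k : ℕ, ∫ x, f x ^ k ∂mu = 1 / (k + 1) := by
  obtain ⟨V, hV, hV01, hVW⟩ := exists_measurable_eqOn_Icc hWmeas hW01
  have hmem : ∀ᵐ x ∂mu, x ∈ Icc (0:ℝ) 1 := ae_restrict_mem measurableSet_Icc
  have hfV : f =ᵐ[mu] score mu V := by
    filter_upwards [hmem] with x hx
    rw [hf, score]
    exact integral_mu_congr fun y hy => (hVW x hx y hy).symm
  have hVT : IsTournament mu V := by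
    filter_upwards [hWsum, Measure.quasiMeasurePreserving_fst.ae hmem,
      Measure.quasiMeasurePreserving_snd.ae hmem] with p hp h1 h2
    rwa [hVW _ h1 _ h2, hVW _ h2 _ h1]
  have hVC3 : ∫ x, ∫ y, ∫ z, V x y * V y z * V z x ∂mu ∂mu ∂mu = 0 := by
    rw [← hC3]
    refine integral_mu_congr fun x hx => integral_mu_congr fun y hy =>
      integral_mu_congr fun z hz => ?_
    rw [hVW _ hx _ hy, hVW _ hy _ hz, hVW _ hz _ hx]
  have hmap : mu.map f = mu := by
    rw [Measure.map_congr hfV, map_score_eq_restrict_Icc hV hV01 hVT hVC3]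
    rfl
  refine ⟨hmap, fun k => ?_⟩
  have hfm : AEMeasurable f mu := (measurable_score hV).aemeasurable.congr hfV.symm
  rw [← integral_pow_mu k, ← integral_map hfm (continuous_pow k).aestronglyMeasurable, hmap]
end

section
/- Let f : [0,1] → [0,1] be a non-decreasing measurable function, and suppose that for every non-negative integer n, ∫₀¹ f(x)ⁿ dx = ∫₀¹ (1−f(x))ⁿ dx. Then f(x) + f(1−x) = 1 for almost every x ∈ [0,1]. -/
/-!
The moment condition says that `f` and `g x := 1 - f (1 - x)` have the same moments on `[0, 1]`:
substitute `x ↦ 1 - x` on the right-hand side. Measures supported on a compact interval are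
determined by their moments (Weierstrass approximation), so `f` and `g` have the same
distribution. Both are monotone, so their superlevel sets are nested subintervals of `[0, 1]`;
nested sets of equal measure agree almost everywhere, and comparing rational superlevel sets
gives `f = g` almost everywhere.
-/

open MeasureTheory Set Filter Polynomial

theorem integral_Icc_zero_one_comp_one_sub (F : ℝ → ℝ) :
    ∫ x in Icc (0:ℝ) 1, F (1 - x) = ∫ x in Icc (0:ℝ) 1, F x := by
  rw [integral_Icc_eq_integral_Ioc, integral_Icc_eq_integral_Ioc,
    ← intervalIntegral.integral_of_le zero_le_one, ← intervalIntegral.integral_of_le zero_le_one,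
    intervalIntegral.integral_comp_sub_left F 1]
  norm_num

section Moments

variable {ν ν₁ ν₂ : Measure ℝ} {a b : ℝ}

theorem Continuous.integrable_of_ae_mem_Icc [IsFiniteMeasure ν] {φ : ℝ → ℝ}
    (hφ : Continuous φ) (hν : ∀ᵐ x ∂ν, x ∈ Icc a b) : Integrable φ ν := by
  rw [← Measure.restrict_eq_self_of_ae_mem hν]
  exact hφ.integrableOn_Icc

theorem dist_integral_le_of_ae_mem_Icc [IsFiniteMeasure ν] (hν : ∀ᵐ x ∂ν, x ∈ Icc a b)
    {φ ψ : ℝ → ℝ} (hφ : Continuous φ) (hψ : Continuous ψ) {δ : ℝ}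
    (hδ : ∀ x ∈ Icc a b, |ψ x - φ x| < δ) :
    dist (∫ x, φ x ∂ν) (∫ x, ψ x ∂ν) ≤ δ * ν.real univ := by
  rw [dist_eq_norm,
    ← integral_sub (hφ.integrable_of_ae_mem_Icc hν) (hψ.integrable_of_ae_mem_Icc hν)]
  refine norm_integral_le_of_norm_le_const ?_
  filter_upwards [hν] with x hx
  rw [Real.norm_eq_abs, abs_sub_comm]
  exact (hδ x hx).le

variable [IsFiniteMeasure ν₁] [IsFiniteMeasure ν₂]

theorem integral_eval_eq_of_moment_eq (h₁ : ∀ᵐ x ∂ν₁, x ∈ Icc a b)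
    (h₂ : ∀ᵐ x ∂ν₂, x ∈ Icc a b) (hmom : ∀ n : ℕ, ∫ x, x ^ n ∂ν₁ = ∫ x, x ^ n ∂ν₂) (p : ℝ[X]) :
    ∫ x, p.eval x ∂ν₁ = ∫ x, p.eval x ∂ν₂ := by
  induction p using Polynomial.induction_on' with
  | add p q hp hq =>
    simp only [eval_add]
    rw [integral_add, integral_add, hp, hq] <;>
      exact (Polynomial.continuous _).integrable_of_ae_mem_Icc ‹_›
  | monomial n c =>
    simp only [eval_monomial]
    rw [integral_const_mul, integral_const_mul, hmom]

theorem integral_eq_of_moment_eq (h₁ : ∀ᵐ x ∂ν₁, x ∈ Icc a b)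
    (h₂ : ∀ᵐ x ∂ν₂, x ∈ Icc a b) (hmom : ∀ n : ℕ, ∫ x, x ^ n ∂ν₁ = ∫ x, x ^ n ∂ν₂)
    {φ : ℝ → ℝ} (hφ : Continuous φ) :
    ∫ x, φ x ∂ν₁ = ∫ x, φ x ∂ν₂ := by
  set C := ν₁.real univ + ν₂.real univ
  refine eq_of_forall_dist_le fun ε hε => ?_
  obtain ⟨p, hp⟩ := exists_polynomial_near_of_continuousOn a b φ hφ.continuousOn
    (ε / (C + 1)) (by positivity)
  calc dist (∫ x, φ x ∂ν₁) (∫ x, φ x ∂ν₂)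
      ≤ dist (∫ x, φ x ∂ν₁) (∫ x, p.eval x ∂ν₁) + dist (∫ x, φ x ∂ν₂) (∫ x, p.eval x ∂ν₂) := by
        rw [integral_eval_eq_of_moment_eq h₁ h₂ hmom, dist_comm (∫ x, φ x ∂ν₂)]
        exact dist_triangle _ _ _
    _ ≤ ε / (C + 1) * ν₁.real univ + ε / (C + 1) * ν₂.real univ :=
        add_le_add (dist_integral_le_of_ae_mem_Icc h₁ hφ p.continuous hp)
          (dist_integral_le_of_ae_mem_Icc h₂ hφ p.continuous hp)
    _ ≤ ε := by
        rw [← mul_add, div_mul_eq_mul_div, div_le_iff₀ (by positivity)]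
        nlinarith

theorem Measure.ext_of_moment_eq (h₁ : ∀ᵐ x ∂ν₁, x ∈ Icc a b)
    (h₂ : ∀ᵐ x ∂ν₂, x ∈ Icc a b) (hmom : ∀ n : ℕ, ∫ x, x ^ n ∂ν₁ = ∫ x, x ^ n ∂ν₂) :
    ν₁ = ν₂ :=
  ext_of_forall_integral_eq_of_IsFiniteMeasure fun φ =>
    integral_eq_of_moment_eq h₁ h₂ hmom φ.continuous

end Moments

theorem MonotoneOn.setOf_lt_subset_or_superset {α β : Type*} [LinearOrder α] [Preorder β]
    {s : Set α} {f g : α → β} (hf : MonotoneOn f s) (hg : MonotoneOn g s) (t : β) :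
    {x ∈ s | t < f x} ⊆ {x ∈ s | t < g x} ∨ {x ∈ s | t < g x} ⊆ {x ∈ s | t < f x} := by
  rw [or_iff_not_imp_left, not_subset]
  rintro ⟨x, ⟨hxs, hfx⟩, hgx⟩ y ⟨hys, hgy⟩
  refine ⟨hys, ?_⟩
  rcases le_total x y with hxy | hyx
  · exact hfx.trans_le (hf hxs hys hxy)
  · exact absurd ⟨hxs, hgy.trans_le (hg hys hxs hyx)⟩ hgx

theorem ae_eq_of_subset_or_superset_of_measure_eq {α : Type*} [MeasurableSpace α]
    {μ : Measure α} {A B : Set α} (hAB : A ⊆ B ∨ B ⊆ A) (hμ : μ A = μ B)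
    (hA : NullMeasurableSet A μ) (hB : NullMeasurableSet B μ) (hfin : μ A ≠ ⊤) :
    A =ᵐ[μ] B := by
  rcases hAB with h | h
  · exact ae_eq_of_subset_of_measure_ge h hμ.ge hA (hμ ▸ hfin)
  · exact (ae_eq_of_subset_of_measure_ge h hμ.le hB hfin).symm

theorem ae_eq_of_forall_rat_setOf_lt_ae_eq {α : Type*} [MeasurableSpace α] {μ : Measure α}
    {f g : α → ℝ} (h : ∀ q : ℚ, {x | (q:ℝ) < f x} =ᵐ[μ] {x | (q:ℝ) < g x}) : f =ᵐ[μ] g := by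
  filter_upwards [ae_all_iff.mpr h] with x hx
  rcases lt_trichotomy (f x) (g x) with hlt | heq | hlt
  · obtain ⟨q, hfq, hqg⟩ := exists_rat_btwn hlt
    exact absurd (Iff.of_eq (hx q) |>.mpr hqg) hfq.not_gt
  · exact heq
  · obtain ⟨q, hgq, hqf⟩ := exists_rat_btwn hlt
    exact absurd (Iff.of_eq (hx q) |>.mp hqf) hgq.not_gt

theorem MonotoneOn.ae_eq_of_map_eq {α : Type*} [MeasurableSpace α] [LinearOrder α]
    {μ : Measure α} [IsFiniteMeasure μ] {s : Set α} (hs : ∀ᵐ x ∂μ, x ∈ s) {f g : α → ℝ}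
    (hf : MonotoneOn f s) (hg : MonotoneOn g s) (hfm : AEMeasurable f μ)
    (hgm : AEMeasurable g μ) (hmap : μ.map f = μ.map g) : f =ᵐ[μ] g := by
  refine ae_eq_of_forall_rat_setOf_lt_ae_eq fun q => ?_
  have hs' : s =ᵐ[μ] univ := eventuallyEq_univ.mpr hs
  have hfs : {x ∈ s | (q:ℝ) < f x} =ᵐ[μ] {x | (q:ℝ) < f x} := inter_ae_eq_right_of_ae_eq_univ hs'
  have hgs : {x ∈ s | (q:ℝ) < g x} =ᵐ[μ] {x | (q:ℝ) < g x} := inter_ae_eq_right_of_ae_eq_univ hs'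
  have hmeas : μ {x | (q:ℝ) < f x} = μ {x | (q:ℝ) < g x} := by
    have := congr($hmap (Ioi (q:ℝ)))
    rwa [Measure.map_apply_of_aemeasurable hfm measurableSet_Ioi,
      Measure.map_apply_of_aemeasurable hgm measurableSet_Ioi] at this
  refine hfs.symm.trans ((ae_eq_of_subset_or_superset_of_measure_eq
    (hf.setOf_lt_subset_or_superset hg q) ?_ ?_ ?_ (measure_ne_top _ _)).trans hgs)
  · rw [measure_congr hfs, measure_congr hgs, hmeas]
  · exact (nullMeasurableSet_lt aemeasurable_const hfm).congr hfs.symm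
  · exact (nullMeasurableSet_lt aemeasurable_const hgm).congr hgs.symm

theorem stmt_18
    (f : ℝ → ℝ) (hfmeas : Measurable f)
    (hf01 : ∀ x ∈ Icc (0:ℝ) 1, f x ∈ Icc (0:ℝ) 1)
    (hmono : MonotoneOn f (Icc (0:ℝ) 1))
    (hmom : ∀ n : ℕ, ∫ x in Icc (0:ℝ) 1, f x ^ n = ∫ x in Icc (0:ℝ) 1, (1 - f x) ^ n) :
    ∀ᵐ x ∂(volume.restrict (Icc (0:ℝ) 1)), f x + f (1 - x) = 1 := by
  set μ := volume.restrict (Icc (0:ℝ) 1)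
  set g : ℝ → ℝ := fun x => 1 - f (1 - x)
  have hIcc : ∀ᵐ x ∂μ, x ∈ Icc (0:ℝ) 1 := ae_restrict_mem measurableSet_Icc
  have hreflect : ∀ x ∈ Icc (0:ℝ) 1, 1 - x ∈ Icc (0:ℝ) 1 := fun x ⟨h0, h1⟩ =>
    ⟨by linarith, by linarith⟩
  have hgmeas : Measurable g :=
    measurable_const.sub (hfmeas.comp (measurable_const.sub measurable_id))
  have hg01 : ∀ x ∈ Icc (0:ℝ) 1, g x ∈ Icc (0:ℝ) 1 := fun x hx => by
    obtain ⟨h0, h1⟩ := hf01 _ (hreflect x hx)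
    exact ⟨by linarith, by linarith⟩
  have hgmono : MonotoneOn g (Icc (0:ℝ) 1) := fun x hx y hy hxy =>
    sub_le_sub_left (hmono (hreflect y hy) (hreflect x hx) (by linarith)) 1
  have hmap : μ.map f = μ.map g := by
    refine Measure.ext_of_moment_eq (a := 0) (b := 1) ?_ ?_ fun n => ?_
    · exact (ae_map_iff hfmeas.aemeasurable measurableSet_Icc).mpr (hIcc.mono hf01)
    · exact (ae_map_iff hgmeas.aemeasurable measurableSet_Icc).mpr (hIcc.mono hg01)
    · rw [integral_map hfmeas.aemeasurable (by fun_prop),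
        integral_map hgmeas.aemeasurable (by fun_prop), hmom n]
      exact (integral_Icc_zero_one_comp_one_sub fun y => (1 - f y) ^ n).symm
  filter_upwards [hmono.ae_eq_of_map_eq hIcc hgmono hfmeas.aemeasurable hgmeas.aemeasurable hmap]
    with x hx
  simp only [g] at hx
  linarith
end
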